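/- For any polynomial p of degree at most q on an interval I_m = (t_{m-1}, t_m] of length τ_m, there exists a constant C depending only on q such that ∫_{I_m} p(t)^2 dt ≤ C τ_m^{-1} ∫_{I_m} (t - t_{m-1}) p(t)^2 dt. -/

import Mathlib

open MeasureTheory

namespace Stmt0Aux

lemma intpow (n : ℕ) : (∫ t in Set.Ioc (0:ℝ) 1, t ^ n) = ((n:ℝ)+1)⁻¹ := by
  rw [← intervalIntegral.integral_of_le (by norm_num : (0:ℝ) ≤ 1), integral_pow]
  simp [div_eq_mul_inv]

noncomputable def f (n : ℕ) (a : Fin n → ℝ) (t : ℝ) : ℝ := ∑ i, a i * t ^ (i:ℕ)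

lemma f_cont (n : ℕ) (a : Fin n → ℝ) : Continuous (f n a) := by
  unfold f
  exact continuous_finset_sum _ fun i _ => continuous_const.mul (continuous_pow _)

noncomputable def F (n : ℕ) (a : Fin n → ℝ) : ℝ := ∫ t in Set.Ioc (0:ℝ) 1, (f n a t)^2
noncomputable def G (n : ℕ) (a : Fin n → ℝ) : ℝ := ∫ t in Set.Ioc (0:ℝ) 1, t * (f n a t)^2

lemma sq_expand (n : ℕ) (a : Fin n → ℝ) (t : ℝ) :
    (f n a t)^2 = ∑ i, ∑ j, (a i * a j) * t ^ ((i:ℕ)+(j:ℕ)) := by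
  rw [sq, f, Finset.sum_mul_sum]
  refine Finset.sum_congr rfl fun i _ => Finset.sum_congr rfl fun j _ => ?_
  rw [pow_add]; ring

lemma F_formula (n : ℕ) (a : Fin n → ℝ) :
    F n a = ∑ i, ∑ j, a i * a j * (((i:ℕ):ℝ)+((j:ℕ):ℝ)+1)⁻¹ := by
  unfold F
  simp_rw [sq_expand]
  rw [integral_finset_sum _ (fun i _ => ?_)]
  · refine Finset.sum_congr rfl fun i _ => ?_
    rw [integral_finset_sum _ (fun j _ => ?_)]
    · refine Finset.sum_congr rfl fun j _ => ?_
      rw [integral_const_mul, intpow]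
      push_cast; ring
    · exact (continuous_const.mul (continuous_pow _)).integrableOn_Ioc
  · exact (continuous_finset_sum _ fun j _ =>
      continuous_const.mul (continuous_pow _)).integrableOn_Ioc

lemma G_formula (n : ℕ) (a : Fin n → ℝ) :
    G n a = ∑ i, ∑ j, a i * a j * (((i:ℕ):ℝ)+((j:ℕ):ℝ)+2)⁻¹ := by
  unfold G
  have : ∀ t : ℝ, t * (f n a t)^2 = ∑ i, ∑ j, (a i * a j) * t ^ ((i:ℕ)+(j:ℕ)+1) := by
    intro t
    rw [sq_expand, Finset.mul_sum]
    refine Finset.sum_congr rfl fun i _ => ?_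
    rw [Finset.mul_sum]
    refine Finset.sum_congr rfl fun j _ => ?_
    ring
  simp_rw [this]
  rw [integral_finset_sum _ (fun i _ => ?_)]
  · refine Finset.sum_congr rfl fun i _ => ?_
    rw [integral_finset_sum _ (fun j _ => ?_)]
    · refine Finset.sum_congr rfl fun j _ => ?_
      rw [integral_const_mul, intpow]
      push_cast; ring
    · exact (continuous_const.mul (continuous_pow _)).integrableOn_Ioc
  · exact (continuous_finset_sum _ fun j _ =>
      continuous_const.mul (continuous_pow _)).integrableOn_Ioc

lemma F_cont (n : ℕ) : Continuous (F n) := by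
  have h : F n = fun a => ∑ i : Fin n, ∑ j : Fin n, a i * a j * (((i:ℕ):ℝ)+((j:ℕ):ℝ)+1)⁻¹ :=
    funext (F_formula n)
  rw [h]
  exact continuous_finset_sum _ fun i _ => continuous_finset_sum _ fun j _ =>
    (((continuous_apply i).mul (continuous_apply j)).mul continuous_const)

lemma G_cont (n : ℕ) : Continuous (G n) := by
  have h : G n = fun a => ∑ i : Fin n, ∑ j : Fin n, a i * a j * (((i:ℕ):ℝ)+((j:ℕ):ℝ)+2)⁻¹ :=
    funext (G_formula n)
  rw [h]
  exact continuous_finset_sum _ fun i _ => continuous_finset_sum _ fun j _ =>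
    (((continuous_apply i).mul (continuous_apply j)).mul continuous_const)

lemma F_homog (n : ℕ) (r : ℝ) (a : Fin n → ℝ) : F n (r • a) = r^2 * F n a := by
  simp only [F_formula, Pi.smul_apply, smul_eq_mul, Finset.mul_sum]
  refine Finset.sum_congr rfl fun i _ => Finset.sum_congr rfl fun j _ => by ring

lemma G_homog (n : ℕ) (r : ℝ) (a : Fin n → ℝ) : G n (r • a) = r^2 * G n a := by
  simp only [G_formula, Pi.smul_apply, smul_eq_mul, Finset.mul_sum]
  refine Finset.sum_congr rfl fun i _ => Finset.sum_congr rfl fun j _ => by ring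

lemma F_nonneg (n : ℕ) (a : Fin n → ℝ) : 0 ≤ F n a :=
  setIntegral_nonneg measurableSet_Ioc fun t _ => sq_nonneg _

lemma G_nonneg (n : ℕ) (a : Fin n → ℝ) : 0 ≤ G n a :=
  setIntegral_nonneg measurableSet_Ioc fun t ht => mul_nonneg ht.1.le (sq_nonneg _)

lemma G_pos (n : ℕ) (a : Fin n → ℝ) (ha : a ≠ 0) : 0 < G n a := by
  set p : Polynomial ℝ := ∑ i, Polynomial.C (a i) * Polynomial.X ^ (i:ℕ) with hp
  have hpeval : ∀ t, p.eval t = f n a t := by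
    intro t
    simp [hp, f, Polynomial.eval_finset_sum]
  obtain ⟨i, hi0⟩ := Function.ne_iff.mp ha
  have hi : a i ≠ 0 := by simpa using hi0
  have hcoeff : p.coeff (i:ℕ) = a i := by
    simp [hp, Polynomial.finset_sum_coeff, Polynomial.coeff_C_mul, Polynomial.coeff_X_pow,
      Fin.val_inj]
  have hp0 : p ≠ 0 := fun h => hi (by rw [← hcoeff, h, Polynomial.coeff_zero])
  have hnonneg : 0 ≤ᵐ[volume.restrict (Set.Ioc (0:ℝ) 1)] fun t => t * f n a t ^ 2 :=
    (ae_restrict_iff' measurableSet_Ioc).2 (ae_of_all _ fun t ht =>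
      mul_nonneg ht.1.le (sq_nonneg _))
  have hint : IntegrableOn (fun t => t * f n a t ^ 2) (Set.Ioc (0:ℝ) 1) :=
    (continuous_id.mul ((f_cont n a).pow 2)).integrableOn_Ioc
  rw [G, setIntegral_pos_iff_support_of_nonneg_ae hnonneg hint]
  have hsub : Set.Ioc (0:ℝ) 1 \ {x | p.IsRoot x} ⊆
      Function.support (fun t => t * f n a t ^ 2) ∩ Set.Ioc 0 1 := by
    rintro t ⟨ht, hroot⟩
    refine ⟨?_, ht⟩
    have h1 : f n a t ≠ 0 := by
      rw [← hpeval]; exact hroot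
    exact mul_ne_zero (ne_of_gt ht.1) (pow_ne_zero _ h1)
  calc (0:ENNReal) < volume (Set.Ioc (0:ℝ) 1 \ {x | p.IsRoot x}) := by
        rw [measure_diff_null ((Polynomial.finite_setOf_isRoot hp0).measure_zero _)]
        simp [Real.volume_Ioc]
    _ ≤ _ := measure_mono hsub

lemma key (n : ℕ) (hn : 0 < n) :
    ∃ C : ℝ, 0 < C ∧ ∀ a : Fin n → ℝ, F n a ≤ C * G n a := by
  haveI : Nonempty (Fin n) := ⟨⟨0, hn⟩⟩
  haveI : Nontrivial (Fin n → ℝ) := inferInstance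
  obtain ⟨u0, hu0, hmin⟩ := (isCompact_sphere (0 : Fin n → ℝ) 1).exists_isMinOn
    (NormedSpace.sphere_nonempty.mpr zero_le_one) (G_cont n).continuousOn
  obtain ⟨u1, hu1, hmax⟩ := (isCompact_sphere (0 : Fin n → ℝ) 1).exists_isMaxOn
    (NormedSpace.sphere_nonempty.mpr zero_le_one) (F_cont n).continuousOn
  have hu0ne : u0 ≠ 0 := by
    intro h
    rw [h] at hu0
    simp at hu0
  have hc : 0 < G n u0 := G_pos n u0 hu0ne
  have hM : 0 ≤ F n u1 := F_nonneg n u1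
  refine ⟨F n u1 / G n u0 + 1, by positivity, fun a => ?_⟩
  by_cases ha : a = 0
  · subst ha
    have h1 : F n 0 = 0 := by
      rw [F_formula]; simp
    have h2 : G n 0 = 0 := by
      rw [G_formula]; simp
    rw [h1, h2]; simp
  · have hr : 0 < ‖a‖ := norm_pos_iff.mpr ha
    set u := ‖a‖⁻¹ • a with hu
    have huS : u ∈ Metric.sphere (0 : Fin n → ℝ) 1 := by
      rw [mem_sphere_zero_iff_norm, hu, norm_smul]
      simp [abs_of_nonneg (inv_nonneg.mpr hr.le), inv_mul_cancel₀ hr.ne']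
    have haa : a = ‖a‖ • u := by
      rw [hu, smul_smul, mul_inv_cancel₀ hr.ne', one_smul]
    have h1 : F n u ≤ F n u1 := (isMaxOn_iff.mp hmax) u huS
    have h2 : G n u0 ≤ G n u := (isMinOn_iff.mp hmin) u huS
    have hGu : 0 ≤ G n u := G_nonneg n u
    have hstep : F n u ≤ (F n u1 / G n u0 + 1) * G n u := by
      calc F n u ≤ F n u1 := h1
        _ = (F n u1 / G n u0) * G n u0 := by field_simp
        _ ≤ (F n u1 / G n u0) * G n u :=
            mul_le_mul_of_nonneg_left h2 (div_nonneg hM hc.le)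
        _ ≤ (F n u1 / G n u0 + 1) * G n u := by nlinarith
    rw [haa, F_homog, G_homog]
    nlinarith [sq_nonneg ‖a‖]

end Stmt0Aux

open Stmt0Aux in
/-- Inverse Hölder type inequality for polynomials on an interval:
`∫_{I_m} p² ≤ C τ_m⁻¹ ∫_{I_m} (t - t_{m-1}) p²` with `C` depending only on the degree bound `q`. -/
theorem stmt0 (q : ℕ) :
    ∃ C : ℝ, 0 < C ∧ ∀ (a b : ℝ), a < b → ∀ p : Polynomial ℝ, p.natDegree ≤ q →
      (∫ t in Set.Ioc a b, (p.eval t) ^ 2) ≤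
        C * (b - a)⁻¹ * ∫ t in Set.Ioc a b, (t - a) * (p.eval t) ^ 2 := by
  obtain ⟨C, hC, hkey⟩ := key (q+1) q.succ_pos
  refine ⟨C, hC, fun a b hab p hdeg => ?_⟩
  have hba : (b - a) ≠ 0 := sub_ne_zero.mpr hab.ne'
  have hbapos : 0 < b - a := sub_pos.mpr hab
  -- the rescaled polynomial
  set L : Polynomial ℝ := Polynomial.C (b-a) * Polynomial.X + Polynomial.C a with hL
  set p' : Polynomial ℝ := p.comp L with hp'
  have hLdeg : L.natDegree = 1 := Polynomial.natDegree_linear hba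
  have hdeg' : p'.natDegree ≤ q := by
    rw [hp', Polynomial.natDegree_comp, hLdeg, mul_one]; exact hdeg
  have heval : ∀ s : ℝ, p'.eval s = p.eval ((b-a)*s + a) := by
    intro s
    rw [hp', Polynomial.eval_comp]
    simp [hL]
  set a' : Fin (q+1) → ℝ := fun i => p'.coeff i with ha'
  have hfa : ∀ s : ℝ, f (q+1) a' s = p.eval ((b-a)*s + a) := by
    intro s
    rw [← heval, Polynomial.eval_eq_sum_range' (Nat.lt_succ_of_le hdeg') s, f,
      ← Finset.sum_range (fun i => p'.coeff i * s ^ i)]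
  -- change of variables
  have cov : ∀ g : ℝ → ℝ, (∫ t in Set.Ioc a b, g t) =
      (b-a) * ∫ s in Set.Ioc (0:ℝ) 1, g ((b-a)*s + a) := by
    intro g
    have h := intervalIntegral.integral_comp_mul_add (a := 0) (b := 1) g hba a
    simp only [mul_zero, zero_add, mul_one, smul_eq_mul, sub_add_cancel] at h
    rw [intervalIntegral.integral_of_le hab.le, intervalIntegral.integral_of_le zero_le_one] at h
    rw [h, ← mul_assoc, mul_inv_cancel₀ hba, one_mul]
  have e1 : (∫ t in Set.Ioc a b, (p.eval t) ^ 2) = (b-a) * F (q+1) a' := by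
    rw [cov (fun t => (p.eval t)^2), F]
    congr 1
    exact setIntegral_congr_fun measurableSet_Ioc fun s _ => by rw [hfa]
  have e2 : (∫ t in Set.Ioc a b, (t - a) * (p.eval t) ^ 2) =
      (b-a) * ((b-a) * G (q+1) a') := by
    rw [cov (fun t => (t - a) * (p.eval t)^2)]
    congr 1
    have : ∀ s ∈ Set.Ioc (0:ℝ) 1, ((b-a)*s + a - a) * (p.eval ((b-a)*s + a))^2 =
        (b-a) * (s * (f (q+1) a' s)^2) := by
      intro s _
      rw [hfa]; ring
    rw [setIntegral_congr_fun measurableSet_Ioc this, integral_const_mul, G]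
  rw [e1, e2]
  have h := hkey a'
  calc (b-a) * F (q+1) a' ≤ (b-a) * (C * G (q+1) a') :=
        mul_le_mul_of_nonneg_left h hbapos.le
    _ = C * (b-a)⁻¹ * ((b-a) * ((b-a) * G (q+1) a')) := by
        field_simp
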